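/- arXiv:1810.06915 — 3 statements merged into one kernel-verified Lean document; each statement's English description precedes it below -/
import Mathlib

section
/- Fix β > 0, 0 < γ < 1/(2√(2β)), and t ∈ [0,1]. Consider the quadratic polynomial P(X) = X² + (4(1−βγ²)t² − 4t + 1)X + 4t⁴γ⁴β². Its discriminant equals Δ = 4(1−c²)(2t−1)²(t−t⁺)(t−t⁻), where c = γ√(2β), t⁻ = 1/(2(1+c)), t⁺ = 1/(2(1−c)). Hence Δ < 0 for t⁻ < t < t⁺ with t ≠ 1/2, and Δ > 0 for 0 < t < t⁻ and for t⁺ < t ≤ 1. -/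
/-!
With `s = c² = 2βγ²` the linear coefficient is `b = (2t-1)² - 2st²` and the constant term is
`s²t⁴`, so `b² - 4s²t⁴ = (b + 2st²)(b - 2st²) = (2t-1)² ((2t-1)² - (2ct)²)`, and the last factor
splits as `(2t(1-c) - 1)(2t(1+c) - 1)`. Since `0 < c < 1/2`, the roots satisfy `t⁻ < 1/2 < t⁺`,
and the sign of `Δ` is that of `(t - t⁺)(t - t⁻)` away from the double root `t = 1/2`.
-/

lemma sq_sub_two_mul_sq_sub_sq (s t : ℝ) :
    ((2 * t - 1) ^ 2 - 2 * s * t ^ 2) ^ 2 - 4 * (s ^ 2 * t ^ 4) =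
      (2 * t - 1) ^ 2 * ((2 * t - 1) ^ 2 - 4 * s * t ^ 2) := by
  ring

lemma sq_sub_four_sq_mul_sq_eq (c t : ℝ) (hc₁ : 1 - c ≠ 0) (hc₂ : 1 + c ≠ 0) :
    (2 * t - 1) ^ 2 - 4 * c ^ 2 * t ^ 2 =
      4 * (1 - c ^ 2) * (t - 1 / (2 * (1 - c))) * (t - 1 / (2 * (1 + c))) := by
  field_simp
  ring

lemma one_div_two_mul_one_add_lt_half {c : ℝ} (hc : 0 < c) : 1 / (2 * (1 + c)) < 1 / 2 := by
  gcongr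
  linarith

lemma half_lt_one_div_two_mul_one_sub {c : ℝ} (hc₀ : 0 < c) (hc₁ : c < 1) :
    1 / 2 < 1 / (2 * (1 - c)) := by
  gcongr
  linarith

lemma factored_discr_neg {c t : ℝ} (hc₀ : 0 < c) (hc₁ : c < 1)
    (hm : 1 / (2 * (1 + c)) < t) (hp : t < 1 / (2 * (1 - c))) (ht : t ≠ 1 / 2) :
    4 * (1 - c ^ 2) * (2 * t - 1) ^ 2 * (t - 1 / (2 * (1 - c))) * (t - 1 / (2 * (1 + c))) < 0 := by
  have hA : 0 < 4 * (1 - c ^ 2) * (2 * t - 1) ^ 2 := by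
    have : 2 * t - 1 ≠ 0 := fun h => ht (by linarith)
    have : 0 < 1 - c ^ 2 := by nlinarith
    positivity
  exact mul_neg_of_neg_of_pos (mul_neg_of_pos_of_neg hA (by linarith)) (by linarith)

lemma factored_discr_pos {c t : ℝ} (hc₀ : 0 < c) (hc₁ : c < 1)
    (ht : t < 1 / (2 * (1 + c)) ∨ 1 / (2 * (1 - c)) < t) :
    0 < 4 * (1 - c ^ 2) * (2 * t - 1) ^ 2 * (t - 1 / (2 * (1 - c))) * (t - 1 / (2 * (1 + c))) := by
  have hm := one_div_two_mul_one_add_lt_half hc₀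
  have hp := half_lt_one_div_two_mul_one_sub hc₀ hc₁
  have hA : 0 < 4 * (1 - c ^ 2) * (2 * t - 1) ^ 2 := by
    have : 2 * t - 1 ≠ 0 := by rcases ht with ht | ht <;> intro h <;> linarith
    have : 0 < 1 - c ^ 2 := by nlinarith
    positivity
  rcases ht with ht | ht
  · exact mul_pos_of_neg_of_neg (mul_neg_of_pos_of_neg hA (by linarith)) (by linarith)
  · exact mul_pos (mul_pos hA (by linarith)) (by linarith)

lemma mul_sqrt_two_mul_mem_Ioo_and_sq_eq {β γ : ℝ} (hβ : 0 < β) (hγ : 0 < γ)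
    (hγ' : γ < 1 / (2 * Real.sqrt (2 * β))) :
    γ * Real.sqrt (2 * β) ∈ Set.Ioo 0 (1 / 2) ∧ (γ * Real.sqrt (2 * β)) ^ 2 = 2 * β * γ ^ 2 := by
  have hs : 0 < Real.sqrt (2 * β) := Real.sqrt_pos.mpr (by positivity)
  refine ⟨⟨by positivity, ?_⟩, ?_⟩
  · rwa [lt_div_iff₀ (by positivity), mul_comm 2, ← mul_assoc, ← lt_div_iff₀ two_pos] at hγ'
  · rw [mul_pow, Real.sq_sqrt (by positivity)]
    ring

theorem discriminant_point_C_general (β γ t : ℝ) (hβ : 0 < β) (hγ : 0 < γ)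
    (hγ' : γ < 1 / (2 * Real.sqrt (2 * β))) :
    let c := γ * Real.sqrt (2 * β)
    let tm := 1 / (2 * (1 + c))
    let tp := 1 / (2 * (1 - c))
    let b := 4 * (1 - β * γ ^ 2) * t ^ 2 - 4 * t + 1
    let c₀ := 4 * t ^ 4 * γ ^ 4 * β ^ 2
    let Δ := b ^ 2 - 4 * c₀
    Δ = 4 * (1 - c ^ 2) * (2 * t - 1) ^ 2 * (t - tp) * (t - tm) ∧
    ((tm < t ∧ t < tp ∧ t ≠ 1 / 2) → Δ < 0) ∧
    (((0 < t ∧ t < tm) ∨ (tp < t ∧ t ≤ 1)) → 0 < Δ) := by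
  intro c tm tp b c₀ Δ
  obtain ⟨⟨hc₀, hc_half⟩, hc_sq⟩ := mul_sqrt_two_mul_mem_Ioo_and_sq_eq hβ hγ hγ'
  have hc₁ : c < 1 := by linarith
  have hb : b = (2 * t - 1) ^ 2 - 2 * c ^ 2 * t ^ 2 := by
    linear_combination (2 * t ^ 2) * hc_sq
  have hc₀' : c₀ = (c ^ 2) ^ 2 * t ^ 4 := by
    linear_combination (-t ^ 4 * (c ^ 2 + 2 * β * γ ^ 2)) * hc_sq
  have hΔ : Δ = 4 * (1 - c ^ 2) * (2 * t - 1) ^ 2 * (t - tp) * (t - tm) := by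
    show b ^ 2 - 4 * c₀ = _
    rw [hb, hc₀', sq_sub_two_mul_sq_sub_sq,
      sq_sub_four_sq_mul_sq_eq c t (by linarith) (by linarith)]
    ring
  refine ⟨hΔ, fun ⟨hm, hp, ht⟩ => hΔ ▸ factored_discr_neg hc₀ hc₁ hm hp ht, fun ht => ?_⟩
  exact hΔ ▸ factored_discr_pos hc₀ hc₁ (ht.imp (·.2) (·.1))

/-- The discriminant of the reduced characteristic polynomial
`P(X) = X² + (4(1−βγ²)t² − 4t + 1)X + 4t⁴γ⁴β²` at the transition point `C`
equals `4(1−c²)(2t−1)²(t−t⁺)(t−t⁻)`; it is negative for `t⁻ < t < t⁺`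
(`t ≠ 1/2`) and positive for `0 < t < t⁻` and for `t⁺ < t ≤ 1`. -/
theorem discriminant_point_C (β γ t : ℝ) (hβ : 0 < β) (hγ : 0 < γ)
    (hγ' : γ < 1 / (2 * Real.sqrt (2 * β))) (ht : t ∈ Set.Icc (0 : ℝ) 1) :
    let c := γ * Real.sqrt (2 * β)
    let tm := 1 / (2 * (1 + c))
    let tp := 1 / (2 * (1 - c))
    let b := 4 * (1 - β * γ ^ 2) * t ^ 2 - 4 * t + 1
    let c₀ := 4 * t ^ 4 * γ ^ 4 * β ^ 2
    let Δ := b ^ 2 - 4 * c₀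
    Δ = 4 * (1 - c ^ 2) * (2 * t - 1) ^ 2 * (t - tp) * (t - tm) ∧
    ((tm < t ∧ t < tp ∧ t ≠ 1 / 2) → Δ < 0) ∧
    (((0 < t ∧ t < tm) ∨ (tp < t ∧ t ≤ 1)) → 0 < Δ) :=
  discriminant_point_C_general β γ t hβ hγ hγ'
end

section
/- Fix α, β > 0 and j ∈ ℝ, and let g(ρ) = (2β−ρ²)(2(α+β−j)−ρ²). Define f(ρ) = 2ρ²g(ρ)g''(ρ) + 2ρg(ρ)g'(ρ) − ρ²g'(ρ)² − 4g(ρ)². Then f(ρ) = 4P(j) where P, viewed as a quadratic polynomial in j, equals P(j) = −16β²j² + 8(ρ⁶ − 3βρ⁴ + 4β²(α+β))j + 3ρ⁸ − 8(α+2β)ρ⁶ + 24β(α+β)ρ⁴ − 16β²(α+β)², and the discriminant of P in j equals −64ρ⁶(2β−ρ²)³. In particular, for 0 < ρ² < 2β, f(ρ) < 0 for every j ∈ ℝ. -/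
/-!
Since `g(x) = (2β − x²)(2(α+β−j) − x²)` is an even quartic, `g'` and `g''` are explicit
polynomials, so `f = 4P(j)` and the discriminant formula are polynomial identities. For
`0 < ρ² < 2β` the discriminant `−64ρ⁶(2β−ρ²)³` is negative while the leading coefficient
`−16β²` is nonpositive, so completing the square shows `P(j) < 0` for every `j`.
-/

theorem quadratic_neg_of_discrim_neg {K : Type*} [Field K] [LinearOrder K] [IsStrictOrderedRing K]
    {a b c : K} (ha : a ≤ 0) (h : discrim a b c < 0) (x : K) :
    a * (x * x) + b * x + c < 0 := by
  have key : 4 * a * (a * (x * x) + b * x + c) = (2 * a * x + b) ^ 2 - discrim a b c := by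
    rw [discrim]; ring
  nlinarith [sq_nonneg (2 * a * x + b)]

theorem deriv_mul_sub_sq (a b : ℝ) :
    deriv (fun x : ℝ => (a - x ^ 2) * (b - x ^ 2)) = fun x => 4 * x ^ 3 - 2 * (a + b) * x := by
  funext x
  exact (((hasDerivAt_pow 2 x).const_sub a).mul ((hasDerivAt_pow 2 x).const_sub b)).deriv.trans
    (by ring)

theorem deriv_deriv_mul_sub_sq (a b : ℝ) :
    deriv (deriv (fun x : ℝ => (a - x ^ 2) * (b - x ^ 2))) = fun x => 12 * x ^ 2 - 2 * (a + b) := by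
  rw [deriv_mul_sub_sq]
  funext x
  exact (((hasDerivAt_pow 3 x).const_mul 4).sub ((hasDerivAt_id x).const_mul _)).deriv.trans
    (by norm_num; ring)

theorem rank_one_negativity_general (α β j ρ : ℝ) :
    let g : ℝ → ℝ := fun x => (2 * β - x ^ 2) * (2 * (α + β - j) - x ^ 2)
    let f := 2 * ρ ^ 2 * g ρ * deriv (deriv g) ρ +
      2 * ρ * g ρ * deriv g ρ - ρ ^ 2 * (deriv g ρ) ^ 2 - 4 * (g ρ) ^ 2
    let P : ℝ → ℝ := fun y => -16 * β ^ 2 * y ^ 2 +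
      8 * (ρ ^ 6 - 3 * β * ρ ^ 4 + 4 * β ^ 2 * (α + β)) * y +
      3 * ρ ^ 8 - 8 * (α + 2 * β) * ρ ^ 6 + 24 * β * (α + β) * ρ ^ 4 -
      16 * β ^ 2 * (α + β) ^ 2
    f = 4 * P j ∧
    (8 * (ρ ^ 6 - 3 * β * ρ ^ 4 + 4 * β ^ 2 * (α + β))) ^ 2 -
      4 * (-16 * β ^ 2) *
        (3 * ρ ^ 8 - 8 * (α + 2 * β) * ρ ^ 6 + 24 * β * (α + β) * ρ ^ 4 -
          16 * β ^ 2 * (α + β) ^ 2) =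
      -64 * ρ ^ 6 * (2 * β - ρ ^ 2) ^ 3 ∧
    (0 < ρ ^ 2 ∧ ρ ^ 2 < 2 * β → f < 0) := by
  intro g f P
  have hf : f = 4 * P j := by
    have hg'' : deriv (deriv g) ρ = _ := congrFun (deriv_deriv_mul_sub_sq _ _) ρ
    have hg' : deriv g ρ = _ := congrFun (deriv_mul_sub_sq _ _) ρ
    simp only [f, hg'', hg', g, P]
    ring
  have hdisc : discrim (-16 * β ^ 2) (8 * (ρ ^ 6 - 3 * β * ρ ^ 4 + 4 * β ^ 2 * (α + β)))
      (3 * ρ ^ 8 - 8 * (α + 2 * β) * ρ ^ 6 + 24 * β * (α + β) * ρ ^ 4 -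
        16 * β ^ 2 * (α + β) ^ 2) = -64 * ρ ^ 6 * (2 * β - ρ ^ 2) ^ 3 := by
    rw [discrim]; ring
  refine ⟨hf, hdisc, fun ⟨hρ, hρβ⟩ => ?_⟩
  have hρ6 : 0 < ρ ^ 6 := by simpa only [← pow_mul] using pow_pos hρ 3
  have hdisc_neg : -64 * ρ ^ 6 * (2 * β - ρ ^ 2) ^ 3 < 0 := by
    have := pow_pos (sub_pos.2 hρβ) 3
    nlinarith
  have hP := quadratic_neg_of_discrim_neg (by nlinarith) (hdisc ▸ hdisc_neg) j
  simp only [hf, P]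
  linarith

/-- Key negativity claim of Lemma 6.8: with
`g(ρ) = (2β−ρ²)(2(α+β−j)−ρ²)` and
`f(ρ) = 2ρ²g g'' + 2ρ g g' − ρ²(g')² − 4g²`, one has `f(ρ) = 4P(j)` where `P`
is an explicit quadratic in `j` with discriminant `−64ρ⁶(2β−ρ²)³`; hence for
`0 < ρ² < 2β`, `f(ρ) < 0` for every `j`. -/
theorem rank_one_negativity (α β j ρ : ℝ) (hα : 0 < α) (hβ : 0 < β) :
    let g : ℝ → ℝ := fun x => (2 * β - x ^ 2) * (2 * (α + β - j) - x ^ 2)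
    let f := 2 * ρ ^ 2 * g ρ * deriv (deriv g) ρ +
      2 * ρ * g ρ * deriv g ρ - ρ ^ 2 * (deriv g ρ) ^ 2 - 4 * (g ρ) ^ 2
    let P : ℝ → ℝ := fun y => -16 * β ^ 2 * y ^ 2 +
      8 * (ρ ^ 6 - 3 * β * ρ ^ 4 + 4 * β ^ 2 * (α + β)) * y +
      3 * ρ ^ 8 - 8 * (α + 2 * β) * ρ ^ 6 + 24 * β * (α + β) * ρ ^ 4 -
      16 * β ^ 2 * (α + β) ^ 2
    f = 4 * P j ∧
    (8 * (ρ ^ 6 - 3 * β * ρ ^ 4 + 4 * β ^ 2 * (α + β))) ^ 2 -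
      4 * (-16 * β ^ 2) *
        (3 * ρ ^ 8 - 8 * (α + 2 * β) * ρ ^ 6 + 24 * β * (α + β) * ρ ^ 4 -
          16 * β ^ 2 * (α + β) ^ 2) =
      -64 * ρ ^ 6 * (2 * β - ρ ^ 2) ^ 3 ∧
    (0 < ρ ^ 2 ∧ ρ ^ 2 < 2 * β → f < 0) :=
  rank_one_negativity_general α β j ρ
end

section
/- The 4×4 real matrix M(a) = [[0,0,0,a],[0,0,a,0],[0,a,0,b],[a,0,−b,0]] (for real a,b) has characteristic polynomial χ(X) = X⁴ + (b² − 2a²)X² + a⁴; in particular its eigenvalues λ satisfy λ² are roots of Y² + (b² − 2a²)Y + a⁴, whose discriminant is b²(b² − 4a²). Hence if 0 < b < 2|a| then all four eigenvalues have nonzero real and nonzero imaginary part. -/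
/-! The characteristic polynomial is a quadratic in `X²` whose discriminant `b²(b² − 4a²)` is
negative when `0 < b < 2|a|`, so every eigenvalue `λ` has non-real `λ²`. A real or purely
imaginary `λ` would have real `λ²`. -/

open Polynomial

section FocusFocus

variable {R : Type*} [CommRing R]

def focusFocusMatrix (a b : R) : Matrix (Fin 4) (Fin 4) R :=
  !![0, 0, 0, a; 0, 0, a, 0; 0, a, 0, b; a, 0, -b, 0]

theorem charpoly_focusFocusMatrix (a b : R) :
    (focusFocusMatrix a b).charpoly = X ^ 4 + C (b ^ 2 - 2 * a ^ 2) * X ^ 2 + C (a ^ 4) := by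
  rw [Matrix.charpoly, Matrix.det_succ_row_zero]
  simp [Fin.sum_univ_succ, Matrix.det_fin_three, Matrix.charmatrix_apply, focusFocusMatrix,
    Fin.succAbove, map_ofNat]
  ring

end FocusFocus

theorem Matrix.det_smul_one_sub_eq_eval_charpoly {R n : Type*} [CommRing R] [Fintype n]
    [DecidableEq n] (N : Matrix n n R) (z : R) : (z • 1 - N).det = N.charpoly.eval z := by
  rw [Matrix.eval_charpoly, Matrix.scalar_apply, Matrix.smul_one_eq_diagonal]

theorem re_ne_zero_and_im_ne_zero_of_biquadratic_eq_zero {p q : ℝ} (hd : discrim 1 p q < 0)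
    {z : ℂ} (hz : z ^ 4 + p * z ^ 2 + q = 0) : z.re ≠ 0 ∧ z.im ≠ 0 := by
  suffices (z ^ 2).im ≠ 0 by
    rw [sq, Complex.mul_im] at this
    constructor <;> rintro h <;> simp [h] at this
  intro h
  have hw : z ^ 2 = ((z ^ 2).re : ℂ) := Complex.ext rfl (by simp [h])
  have hroot : 1 * ((z ^ 2).re * (z ^ 2).re) + p * (z ^ 2).re + q = 0 := by
    apply Complex.ofReal_injective
    push_cast
    rw [← hw]
    linear_combination hz
  exact quadratic_ne_zero_of_discrim_ne_sq (fun s hs => by nlinarith [sq_nonneg s]) _ hroot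

/-- The matrix `M(a,b) = [[0,0,0,a],[0,0,a,0],[0,a,0,b],[a,0,−b,0]]` has
characteristic polynomial `X⁴ + (b² − 2a²)X² + a⁴`; the discriminant of
`Y² + (b²−2a²)Y + a⁴` is `b²(b²−4a²)`; and if `0 < b < 2|a|` then every
eigenvalue of `M` has nonzero real and nonzero imaginary part. -/
theorem charpoly_focus_focus_matrix (a b : ℝ) :
    let M : Matrix (Fin 4) (Fin 4) ℝ :=
      !![0, 0, 0, a; 0, 0, a, 0; 0, a, 0, b; a, 0, -b, 0]
    M.charpoly = Polynomial.X ^ 4 +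
      Polynomial.C (b ^ 2 - 2 * a ^ 2) * Polynomial.X ^ 2 +
      Polynomial.C (a ^ 4) ∧
    (b ^ 2 - 2 * a ^ 2) ^ 2 - 4 * a ^ 4 = b ^ 2 * (b ^ 2 - 4 * a ^ 2) ∧
    (0 < b ∧ b < 2 * |a| →
      ∀ z : ℂ, Matrix.det (z • (1 : Matrix (Fin 4) (Fin 4) ℂ) -
        M.map Complex.ofReal) = 0 → z.re ≠ 0 ∧ z.im ≠ 0) := by
  intro M
  have hχ : M.charpoly = _ := charpoly_focusFocusMatrix a b
  have hdisc : (b ^ 2 - 2 * a ^ 2) ^ 2 - 4 * a ^ 4 = b ^ 2 * (b ^ 2 - 4 * a ^ 2) := by ring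
  refine ⟨hχ, hdisc, ?_⟩
  rintro ⟨hb0, hb2⟩ z hz
  have hd : discrim 1 (b ^ 2 - 2 * a ^ 2) (a ^ 4) < 0 := by
    have hb4 : b ^ 2 < 4 * a ^ 2 := by nlinarith [abs_nonneg a, sq_abs a]
    rw [discrim, mul_one, hdisc]
    exact mul_neg_of_pos_of_neg (by positivity) (by linarith)
  have hmap : (M.map Complex.ofReal).charpoly = M.charpoly.map Complex.ofRealHom :=
    M.charpoly_map Complex.ofRealHom
  rw [Matrix.det_smul_one_sub_eq_eval_charpoly, hmap, hχ] at hz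
  apply re_ne_zero_and_im_ne_zero_of_biquadratic_eq_zero hd
  simpa using hz
end
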